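/- Let H be an infinite-dimensional complex Hilbert space. Then the identity operator on H is the sum of two commutators of bounded operators: there exist continuous linear maps A, B, C, D : H → H such that (A∘B − B∘A) + (C∘D − D∘C) = id_H. -/

import Mathlib

open Function
open scoped ENNReal

/-! An infinite-dimensional Hilbert space `H` is isomorphic to `ℓ²(ι)` for an infinite `ι`, and
`ι ≃ ι ⊕ ι` splits `ι` into two copies of itself. Restricting to the copies and extending back by
zero gives operators `tᵢ`, `sᵢ` with `tᵢ sᵢ = 1` and `s₁ t₁ + s₂ t₂ = 1` (the relations of the
Cuntz algebra `𝒪₂`), whence `[t₁, s₁] + [t₂, s₂] = 2 - 1 = 1`. -/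

structure IsCuntzPair {R : Type*} [Ring R] (s₁ t₁ s₂ t₂ : R) : Prop where
  left_inv₁ : t₁ * s₁ = 1
  left_inv₂ : t₂ * s₂ = 1
  add_eq_one : s₁ * t₁ + s₂ * t₂ = 1

namespace IsCuntzPair

variable {R S : Type*} [Ring R] [Ring S] {s₁ t₁ s₂ t₂ : R}

theorem map {F : Type*} [FunLike F R S] [RingHomClass F R S] (h : IsCuntzPair s₁ t₁ s₂ t₂)
    (φ : F) : IsCuntzPair (φ s₁) (φ t₁) (φ s₂) (φ t₂) where
  left_inv₁ := by rw [← map_mul, h.left_inv₁, map_one]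
  left_inv₂ := by rw [← map_mul, h.left_inv₂, map_one]
  add_eq_one := by rw [← map_mul, ← map_mul, ← map_add, h.add_eq_one, map_one]

theorem commutator_add_commutator_eq_one (h : IsCuntzPair s₁ t₁ s₂ t₂) :
    (t₁ * s₁ - s₁ * t₁) + (t₂ * s₂ - s₂ * t₂) = 1 := by
  rw [sub_add_sub_comm, h.left_inv₁, h.left_inv₂, h.add_eq_one, add_sub_cancel_right]

end IsCuntzPair

namespace lp

variable {𝕜 E : Type*} [NormedField 𝕜] [NormedAddCommGroup E] [NormedSpace 𝕜 E]
  {α β : Type*} {p : ℝ≥0∞} {f : α → β}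

lemma memℓp_comp (hp : 0 < p.toReal) (hf : Injective f) (x : lp (fun _ : β => E) p) :
    Memℓp (x ∘ f) p :=
  memℓp_gen (((lp.memℓp x).summable hp).comp_injective hf)

lemma hasSum_norm_rpow_extend_zero (hp : 0 < p.toReal) (hf : Injective f)
    (x : lp (fun _ : α => E) p) :
    HasSum (fun b => ‖extend f x 0 b‖ ^ p.toReal) (∑' a, ‖x a‖ ^ p.toReal) := by
  have hextend :
      (fun b => ‖extend f x 0 b‖ ^ p.toReal) = extend f (fun a => ‖x a‖ ^ p.toReal) 0 := by
    funext b
    rw [apply_extend (fun v : E => ‖v‖ ^ p.toReal)]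
    congr 1
    funext _
    simp [Real.zero_rpow hp.ne']
  rw [hextend, _root_.hasSum_extend_zero hf]
  exact ((lp.memℓp x).summable hp).hasSum

variable [Fact (1 ≤ p)]

variable (E) in
noncomputable def compCLM (hp : 0 < p.toReal) (hf : Injective f) :
    lp (fun _ : β => E) p →L[𝕜] lp (fun _ : α => E) p :=
  LinearMap.mkContinuous
    { toFun x := ⟨x ∘ f, memℓp_comp hp hf x⟩
      map_add' _ _ := rfl
      map_smul' _ _ := rfl } 1 fun x => by
    refine norm_le_of_tsum_le hp (by positivity) ?_
    rw [one_mul, norm_rpow_eq_tsum hp x]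
    exact tsum_comp_le_tsum_of_inj ((lp.memℓp x).summable hp) (fun _ => by positivity) hf

@[simp] lemma compCLM_apply (hp : 0 < p.toReal) (hf : Injective f) (x : lp (fun _ : β => E) p)
    (a : α) : compCLM (𝕜 := 𝕜) E hp hf x a = x (f a) := rfl

variable (E) in
noncomputable def extendByZeroCLM (hp : 0 < p.toReal) (hf : Injective f) :
    lp (fun _ : α => E) p →L[𝕜] lp (fun _ : β => E) p :=
  LinearMap.mkContinuous
    { toFun x := ⟨extend f x 0, memℓp_gen (hasSum_norm_rpow_extend_zero hp hf x).summable⟩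
      map_add' x y := by
        ext b
        simp only [coeFn_add, Pi.add_apply]
        simpa using congrFun (extend_add f x y 0 0) b
      map_smul' c x := by
        ext b
        simpa using congrFun (extend_smul c f x 0) b } 1 fun x => by
    refine norm_le_of_tsum_le hp (by positivity) ?_
    rw [one_mul, norm_rpow_eq_tsum hp x]
    exact (hasSum_norm_rpow_extend_zero hp hf x).tsum_eq.le

@[simp] lemma extendByZeroCLM_apply (hp : 0 < p.toReal) (hf : Injective f)
    (x : lp (fun _ : α => E) p) (b : β) :
    extendByZeroCLM (𝕜 := 𝕜) E hp hf x b = extend f x 0 b := rfl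

lemma compCLM_comp_extendByZeroCLM (hp : 0 < p.toReal) (hf : Injective f) :
    compCLM (𝕜 := 𝕜) E hp hf ∘L extendByZeroCLM E hp hf = .id 𝕜 _ := by
  ext x a
  simp [hf.extend_apply]

lemma coe_extendByZeroCLM_compCLM (hp : 0 < p.toReal) (hf : Injective f)
    (x : lp (fun _ : β => E) p) :
    ⇑(extendByZeroCLM (𝕜 := 𝕜) E hp hf (compCLM (𝕜 := 𝕜) E hp hf x))
      = (Set.range f).indicator x := by
  ext b
  by_cases hb : b ∈ Set.range f
  · obtain ⟨a, rfl⟩ := hb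
    simp [hf.extend_apply]
  · simp [Set.indicator_of_notMem hb, extend_apply' _ _ _ hb]

lemma extendByZeroCLM_comp_compCLM_add_of_isCompl (hp : 0 < p.toReal) {f₁ f₂ : α → β}
    (hf₁ : Injective f₁) (hf₂ : Injective f₂) (hcompl : IsCompl (Set.range f₁) (Set.range f₂)) :
    extendByZeroCLM E hp hf₁ ∘L compCLM E hp hf₁ + extendByZeroCLM E hp hf₂ ∘L compCLM E hp hf₂
      = .id 𝕜 (lp (fun _ : β => E) p) := by
  ext x : 1
  apply lp.ext
  simp only [add_apply, ContinuousLinearMap.comp_apply, coeFn_add,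
    coe_extendByZeroCLM_compCLM, ← hcompl.compl_eq, Set.indicator_self_add_compl,
    ContinuousLinearMap.id_apply]

theorem exists_isCuntzPair (hp : 0 < p.toReal) [Infinite α] :
    ∃ s₁ t₁ s₂ t₂ : lp (fun _ : α => E) p →L[𝕜] lp (fun _ : α => E) p,
      IsCuntzPair s₁ t₁ s₂ t₂ := by
  obtain ⟨e⟩ : Nonempty (α ⊕ α ≃ α) := by
    rw [← Cardinal.eq, Cardinal.mk_sum, Cardinal.lift_id,
      Cardinal.add_eq_self (Cardinal.aleph0_le_mk α)]
  have hinl : Injective (e ∘ Sum.inl) := e.injective.comp Sum.inl_injective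
  have hinr : Injective (e ∘ Sum.inr) := e.injective.comp Sum.inr_injective
  have hcompl : IsCompl (Set.range (e ∘ Sum.inl)) (Set.range (e ∘ Sum.inr)) := by
    simpa only [Set.range_comp, e.image_eq_preimage_symm]
      using Set.isCompl_range_inl_range_inr.preimage e.symm
  exact ⟨_, _, _, _,
    { left_inv₁ := compCLM_comp_extendByZeroCLM hp hinl
      left_inv₂ := compCLM_comp_extendByZeroCLM hp hinr
      add_eq_one := extendByZeroCLM_comp_compCLM_add_of_isCompl hp hinl hinr hcompl }⟩

end lp

theorem HilbertBasis.finiteDimensional {ι 𝕜 E : Type*} [RCLike 𝕜] [NormedAddCommGroup E]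
    [InnerProductSpace 𝕜 E] [Finite ι] (b : HilbertBasis ι 𝕜 E) : FiniteDimensional 𝕜 E := by
  have := Fintype.ofFinite ι
  exact .of_basis b.toOrthonormalBasis.toBasis

theorem exists_isCuntzPair_of_not_finiteDimensional {𝕜 E : Type*} [RCLike 𝕜]
    [NormedAddCommGroup E] [InnerProductSpace 𝕜 E] [CompleteSpace E]
    (h : ¬ FiniteDimensional 𝕜 E) :
    ∃ s₁ t₁ s₂ t₂ : E →L[𝕜] E, IsCuntzPair s₁ t₁ s₂ t₂ := by
  obtain ⟨w, b, -⟩ := exists_hilbertBasis 𝕜 E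
  have : Infinite w := by
    rw [← not_finite_iff_infinite]
    exact fun _ => h b.finiteDimensional
  obtain ⟨s₁, t₁, s₂, t₂, hst⟩ := lp.exists_isCuntzPair (𝕜 := 𝕜) (E := 𝕜) (α := w) (p := 2)
    (by norm_num)
  let φ := b.repr.symm.toContinuousLinearEquiv.conjContinuousAlgEquiv
  exact ⟨_, _, _, _, hst.map φ⟩

/-- On an infinite-dimensional complex Hilbert space, the identity operator is the
sum of two commutators of bounded operators. -/
theorem identity_sum_two_commutators_boundedOps
    (H : Type*) [NormedAddCommGroup H] [InnerProductSpace ℂ H] [CompleteSpace H]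
    (hinf : ¬ FiniteDimensional ℂ H) :
    ∃ A B C D : H →L[ℂ] H,
      (A ∘L B - B ∘L A) + (C ∘L D - D ∘L C) = ContinuousLinearMap.id ℂ H := by
  obtain ⟨s₁, t₁, s₂, t₂, hst⟩ := exists_isCuntzPair_of_not_finiteDimensional hinf
  exact ⟨t₁, s₁, t₂, s₂, hst.commutator_add_commutator_eq_one⟩
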